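/- In the modified analysis relation where rule R2 yields the verdict TooShort instead of UnCov, if there exists a path from a vertex (i,μ) to the verdict TooShort, then there exists a trace ς with proj(ς) = μ and a nonempty trace ς' such that ς·ς' ∈ Accept(i); that is, ς is a proper prefix of a trace accepted by i. -/

import Mathlib

/-- An action `l!m` (emission, `isEmission = true`) or `l?m` (reception),
occurring on lifeline `lf` (lifelines are `Fin n`) carrying message `msg : M`. -/
structure MAction (n : ℕ) (M : Type) where
  lf : Fin n
  isEmission : Bool
  msg : M

/-- Interaction terms. -/
inductive Interaction (n : ℕ) (M : Type) : Type where
  | empty : Interaction n M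
  | act : MAction n M → Interaction n M
  | strict : Interaction n M → Interaction n M → Interaction n M
  | seq : Interaction n M → Interaction n M → Interaction n M
  | alt : Interaction n M → Interaction n M → Interaction n M
  | par : Interaction n M → Interaction n M → Interaction n M
  | loopStrict : Interaction n M → Interaction n M
  | loopSeq : Interaction n M → Interaction n M
  | loopPar : Interaction n M → Interaction n M

namespace Interaction

variable {n : ℕ} {M : Type}

/-- `exp_ε` : does the interaction (statically) express the empty trace. -/
def expEps : Interaction n M → Bool
  | empty => true
  | act _ => false
  | strict i1 i2 => expEps i1 && expEps i2
  | seq i1 i2 => expEps i1 && expEps i2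
  | par i1 i2 => expEps i1 && expEps i2
  | alt i1 i2 => expEps i1 || expEps i2
  | loopStrict _ => true
  | loopSeq _ => true
  | loopPar _ => true

/-- `avoids i l` : the interaction may avoid expressing any action on lifeline `l`. -/
def avoids : Interaction n M → Fin n → Bool
  | empty, _ => true
  | act a, l => decide (a.lf ≠ l)
  | strict i1 i2, l => avoids i1 l && avoids i2 l
  | seq i1 i2, l => avoids i1 l && avoids i2 l
  | par i1 i2, l => avoids i1 l && avoids i2 l
  | alt i1 i2, l => avoids i1 l || avoids i2 l
  | loopStrict _, _ => true
  | loopSeq _, _ => true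
  | loopPar _, _ => true

/-- Positions in Dewey notation : words over {1,2}, encoded as lists of booleans
(`false` = 1 = left, `true` = 2 = right). `subAt i p` is the sub-interaction of `i`
at position `p` (None if `p ∉ pos(i)`). -/
def subAt : Interaction n M → List Bool → Option (Interaction n M)
  | i, [] => some i
  | strict i1 _, false :: p => subAt i1 p
  | strict _ i2, true :: p => subAt i2 p
  | seq i1 _, false :: p => subAt i1 p
  | seq _ i2, true :: p => subAt i2 p
  | alt i1 _, false :: p => subAt i1 p
  | alt _ i2, true :: p => subAt i2 p
  | par i1 _, false :: p => subAt i1 p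
  | par _ i2, true :: p => subAt i2 p
  | loopStrict i1, false :: p => subAt i1 p
  | loopSeq i1, false :: p => subAt i1 p
  | loopPar i1, false :: p => subAt i1 p
  | _, _ :: _ => none

/-- `p ∈ pos(i)` -/
def Pos (i : Interaction n M) (p : List Bool) : Prop := (subAt i p).isSome

/-- The frontier `front(i)` of immediately executable action positions. -/
def front : Interaction n M → Finset (List Bool)
  | empty => ∅
  | act _ => {[]}
  | strict i1 i2 =>
      (front i1).image (false :: ·) ∪
      (if expEps i1 then (front i2).image (true :: ·) else ∅)
  | seq i1 i2 =>
      (front i1).image (false :: ·) ∪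
      (((front i2).filter (fun p =>
          (match subAt i2 p with
           | some (act a) => avoids i1 a.lf
           | _ => false) = true)).image (true :: ·))
  | alt i1 i2 => (front i1).image (false :: ·) ∪ (front i2).image (true :: ·)
  | par i1 i2 => (front i1).image (false :: ·) ∪ (front i2).image (true :: ·)
  | loopStrict i1 => (front i1).image (false :: ·)
  | loopSeq i1 => (front i1).image (false :: ·)
  | loopPar i1 => (front i1).image (false :: ·)

/-- Pruning `prune(i,l)` (meaningful when `avoids i l`). -/
def prune : Interaction n M → Fin n → Interaction n M
  | empty, _ => empty
  | act a, _ => act a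
  | strict i1 i2, l => strict (prune i1 l) (prune i2 l)
  | seq i1 i2, l => seq (prune i1 l) (prune i2 l)
  | par i1 i2, l => par (prune i1 l) (prune i2 l)
  | alt i1 i2, l =>
      if avoids i1 l then
        if avoids i2 l then alt (prune i1 l) (prune i2 l) else prune i1 l
      else prune i2 l
  | loopStrict i1, l => if avoids i1 l then loopStrict (prune i1 l) else empty
  | loopSeq i1, l => if avoids i1 l then loopSeq (prune i1 l) else empty
  | loopPar i1, l => if avoids i1 l then loopPar (prune i1 l) else empty

/-- The small-step execution function `χ` (defined exactly on `p ∈ front i`). -/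
def exec : Interaction n M → List Bool → Option (Interaction n M × MAction n M)
  | act a, [] => some (empty, a)
  | strict i1 i2, false :: p => (exec i1 p).map (fun r => (strict r.1 i2, r.2))
  | strict _ i2, true :: p => exec i2 p
  | seq i1 i2, false :: p => (exec i1 p).map (fun r => (seq r.1 i2, r.2))
  | seq i1 i2, true :: p => (exec i2 p).map (fun r => (seq (prune i1 r.2.lf) r.1, r.2))
  | par i1 i2, false :: p => (exec i1 p).map (fun r => (par r.1 i2, r.2))
  | par i1 i2, true :: p => (exec i2 p).map (fun r => (par i1 r.1, r.2))
  | alt i1 _, false :: p => exec i1 p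
  | alt _ i2, true :: p => exec i2 p
  | loopStrict i1, false :: p => (exec i1 p).map (fun r => (strict r.1 (loopStrict i1), r.2))
  | loopSeq i1, false :: p => (exec i1 p).map (fun r => (seq r.1 (loopSeq i1), r.2))
  | loopPar i1, false :: p => (exec i1 p).map (fun r => (par r.1 (loopPar i1), r.2))
  | _, _ => none

/-- Trace semantics `Accept` : the least set containing `ε` when `exp_ε(i)` and
`act·ς'` whenever `χ(i,p) = (i',act)` for some `p ∈ front(i)` and `ς' ∈ Accept(i')`. -/
inductive Accept : Interaction n M → List (MAction n M) → Prop
  | nil {i : Interaction n M} : expEps i = true → Accept i []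
  | cons {i i' : Interaction n M} {a : MAction n M} {ς : List (MAction n M)} {p : List Bool} :
      p ∈ front i → exec i p = some (i', a) → Accept i' ς → Accept i (a :: ς)

end Interaction

open Interaction

/-- projection of a global trace onto a multi-trace. -/
def proj {n : ℕ} {M : Type} : List (MAction n M) → Fin n → List (MAction n M)
  | [], _ => []
  | a :: ς, j => if a.lf = j then a :: proj ς j else proj ς j

/-- A function `Fin n → List (MAction n M)` is a legitimate multi-trace when
each component only holds actions of its own lifeline. -/
def IsMult {n : ℕ} {M : Type} (μ : Fin n → List (MAction n M)) : Prop :=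
  ∀ j : Fin n, ∀ a ∈ μ j, a.lf = j

/-- total number of actions in a multi-trace. -/
def mtLen {n : ℕ} {M : Type} (μ : Fin n → List (MAction n M)) : ℕ :=
  ∑ j : Fin n, (μ j).length

/-- Vertices of the analysis graph. -/
inductive Vertex (n : ℕ) (M : Type) : Type where
  | cov : Vertex n M
  | uncov : Vertex n M
  | node : Interaction n M → (Fin n → List (MAction n M)) → Vertex n M

/-- The analysis relation `⇝` given by rules R1-R4. -/
inductive AnaStep {n : ℕ} {M : Type} : Vertex n M → Vertex n M → Prop
  | r1 {i : Interaction n M} {μ} :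
      (∀ j, μ j = []) → expEps i = true → AnaStep (.node i μ) .cov
  | r2 {i : Interaction n M} {μ} :
      (∀ j, μ j = []) → expEps i = false → AnaStep (.node i μ) .uncov
  | r3 {i i' : Interaction n M} {a : MAction n M} {p : List Bool} {μ} {k : Fin n} {σ} :
      p ∈ front i → exec i p = some (i', a) → μ k = a :: σ →
      AnaStep (.node i μ) (.node i' (Function.update μ k σ))
  | r4 {i : Interaction n M} {μ} :
      (¬ ∀ j, μ j = []) →
      (∀ (j : Fin n) (a : MAction n M) σ, μ j = a :: σ →
        ∀ p ∈ front i, subAt i p ≠ some (.act a)) →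
      AnaStep (.node i μ) .uncov

/-- `ω(i,μ) = Pass` : there is a path `(i,μ) ⇝* Cov`. -/
def OmegaPass {n : ℕ} {M : Type} (i : Interaction n M) (μ : Fin n → List (MAction n M)) : Prop :=
  Relation.ReflTransGen AnaStep (Vertex.node i μ) Vertex.cov


/-- Vertices of the modified analysis graph (with the `TooShort` verdict). -/
inductive Vertex3 (n : ℕ) (M : Type) : Type where
  | cov : Vertex3 n M
  | tooShort : Vertex3 n M
  | uncov : Vertex3 n M
  | node : Interaction n M → (Fin n → List (MAction n M)) → Vertex3 n M

/-- The modified analysis relation where rule R2 yields `TooShort` instead of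
`UnCov` (rules R1, R2', R3, R4). -/
inductive AnaStep3 {n : ℕ} {M : Type} : Vertex3 n M → Vertex3 n M → Prop
  | r1 {i : Interaction n M} {μ} :
      (∀ j, μ j = []) → expEps i = true → AnaStep3 (.node i μ) .cov
  | r2' {i : Interaction n M} {μ} :
      (∀ j, μ j = []) → expEps i = false → AnaStep3 (.node i μ) .tooShort
  | r3 {i i' : Interaction n M} {a : MAction n M} {p : List Bool} {μ} {k : Fin n} {σ} :
      p ∈ front i → exec i p = some (i', a) → μ k = a :: σ →
      AnaStep3 (.node i μ) (.node i' (Function.update μ k σ))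
  | r4 {i : Interaction n M} {μ} :
      (¬ ∀ j, μ j = []) →
      (∀ (j : Fin n) (a : MAction n M) σ, μ j = a :: σ →
        ∀ p ∈ front i, subAt i p ≠ some (.act a)) →
      AnaStep3 (.node i μ) .uncov

namespace Interaction

variable {n : ℕ} {M : Type}

lemma mem_front_strict_left {i1 i2 : Interaction n M} {p} (hp : p ∈ front i1) :
    (false :: p) ∈ front (Interaction.strict i1 i2) :=
  Finset.mem_union_left _ (Finset.mem_image_of_mem _ hp)

lemma mem_front_strict_right {i1 i2 : Interaction n M} {p} (h1 : expEps i1 = true)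
    (hp : p ∈ front i2) : (true :: p) ∈ front (Interaction.strict i1 i2) := by
  refine Finset.mem_union_right _ ?_
  rw [if_pos h1]
  exact Finset.mem_image_of_mem _ hp

lemma mem_front_seq_left {i1 i2 : Interaction n M} {p} (hp : p ∈ front i1) :
    (false :: p) ∈ front (Interaction.seq i1 i2) :=
  Finset.mem_union_left _ (Finset.mem_image_of_mem _ hp)

lemma mem_front_seq_right {i1 i2 : Interaction n M} {p} (hp : p ∈ front i2)
    (hc : (match subAt i2 p with
           | some (.act a) => avoids i1 a.lf
           | _ => false) = true) : (true :: p) ∈ front (Interaction.seq i1 i2) :=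
  Finset.mem_union_right _ (Finset.mem_image_of_mem _ (Finset.mem_filter.mpr ⟨hp, hc⟩))

lemma mem_front_alt_left {i1 i2 : Interaction n M} {p} (hp : p ∈ front i1) :
    (false :: p) ∈ front (Interaction.alt i1 i2) :=
  Finset.mem_union_left _ (Finset.mem_image_of_mem _ hp)

lemma mem_front_alt_right {i1 i2 : Interaction n M} {p} (hp : p ∈ front i2) :
    (true :: p) ∈ front (Interaction.alt i1 i2) :=
  Finset.mem_union_right _ (Finset.mem_image_of_mem _ hp)

lemma mem_front_par_left {i1 i2 : Interaction n M} {p} (hp : p ∈ front i1) :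
    (false :: p) ∈ front (Interaction.par i1 i2) :=
  Finset.mem_union_left _ (Finset.mem_image_of_mem _ hp)

lemma mem_front_par_right {i1 i2 : Interaction n M} {p} (hp : p ∈ front i2) :
    (true :: p) ∈ front (Interaction.par i1 i2) :=
  Finset.mem_union_right _ (Finset.mem_image_of_mem _ hp)

lemma mem_front_loopStrict {i1 : Interaction n M} {p} (hp : p ∈ front i1) :
    (false :: p) ∈ front (Interaction.loopStrict i1) :=
  Finset.mem_image_of_mem _ hp

lemma mem_front_loopSeq {i1 : Interaction n M} {p} (hp : p ∈ front i1) :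
    (false :: p) ∈ front (Interaction.loopSeq i1) :=
  Finset.mem_image_of_mem _ hp

lemma mem_front_loopPar {i1 : Interaction n M} {p} (hp : p ∈ front i1) :
    (false :: p) ∈ front (Interaction.loopPar i1) :=
  Finset.mem_image_of_mem _ hp

lemma mem_front_act {a : MAction n M} : ([] : List Bool) ∈ front (Interaction.act a) :=
  Finset.mem_singleton_self _


lemma expEps_avoids : ∀ (i : Interaction n M) (l : Fin n), expEps i = true → avoids i l = true := by
  intro i l h
  induction i with
  | empty => rfl
  | act a => simp [expEps] at h
  | strict i1 i2 ih1 ih2 =>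
      simp [expEps] at h; simp [avoids, ih1 h.1, ih2 h.2]
  | seq i1 i2 ih1 ih2 =>
      simp [expEps] at h; simp [avoids, ih1 h.1, ih2 h.2]
  | alt i1 i2 ih1 ih2 =>
      simp [expEps] at h
      rcases h with h | h
      · simp [avoids, ih1 h]
      · simp [avoids, ih2 h]
  | par i1 i2 ih1 ih2 =>
      simp [expEps] at h; simp [avoids, ih1 h.1, ih2 h.2]
  | loopStrict i1 ih => rfl
  | loopSeq i1 ih => rfl
  | loopPar i1 ih => rfl

lemma expEps_prune : ∀ (i : Interaction n M) (l : Fin n), expEps i = true → expEps (prune i l) = true := by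
  intro i l h
  induction i with
  | empty => rfl
  | act a => simp [expEps] at h
  | strict i1 i2 ih1 ih2 =>
      simp [expEps] at h ⊢; simp [prune, expEps, ih1 h.1, ih2 h.2]
  | seq i1 i2 ih1 ih2 =>
      simp [expEps] at h ⊢; simp [prune, expEps, ih1 h.1, ih2 h.2]
  | alt i1 i2 ih1 ih2 =>
      simp [expEps] at h
      rcases h with h | h
      · have ha := expEps_avoids i1 l h
        simp [prune, ha]
        by_cases h2 : avoids i2 l = true
        · simp [h2, expEps, ih1 h]
        · simp [h2, ih1 h]
      · by_cases h1 : avoids i1 l = true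
        · by_cases h2 : avoids i2 l = true
          · simp [prune, h1, h2, expEps, ih2 h]
          · have := expEps_avoids i2 l h; simp [this] at h2
        · simp [prune, h1, ih2 h]
  | par i1 i2 ih1 ih2 =>
      simp [expEps] at h ⊢; simp [prune, expEps, ih1 h.1, ih2 h.2]
  | loopStrict i1 ih => by_cases h1 : avoids i1 l = true <;> simp [prune, h1, expEps]
  | loopSeq i1 ih => by_cases h1 : avoids i1 l = true <;> simp [prune, h1, expEps]
  | loopPar i1 ih => by_cases h1 : avoids i1 l = true <;> simp [prune, h1, expEps]

lemma exec_front : ∀ (i : Interaction n M) (p : List Bool), p ∈ front i →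
    ∃ i' a, exec i p = some (i', a) ∧ subAt i p = some (.act a) := by
  intro i
  induction i with
  | empty => intro p hp; simp [front] at hp
  | act a =>
      intro p hp; simp [front] at hp; subst hp
      exact ⟨.empty, a, rfl, rfl⟩
  | strict i1 i2 ih1 ih2 =>
      intro p hp
      simp [front] at hp
      rcases hp with ⟨q, hq, rfl⟩ | hp
      · obtain ⟨i', a, he, hs⟩ := ih1 q hq
        exact ⟨.strict i' i2, a, by simp [exec, he], by simpa [subAt] using hs⟩
      · by_cases he1 : expEps i1 = true
        · simp [he1] at hp
          rcases hp with ⟨q, hq, rfl⟩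
          obtain ⟨i', a, he, hs⟩ := ih2 q hq
          exact ⟨i', a, by simp [exec, he], by simpa [subAt] using hs⟩
        · simp [he1] at hp
  | seq i1 i2 ih1 ih2 =>
      intro p hp
      simp [front] at hp
      rcases hp with ⟨q, hq, rfl⟩ | ⟨q, ⟨hq, _⟩, rfl⟩
      · obtain ⟨i', a, he, hs⟩ := ih1 q hq
        exact ⟨.seq i' i2, a, by simp [exec, he], by simpa [subAt] using hs⟩
      · obtain ⟨i', a, he, hs⟩ := ih2 q hq
        exact ⟨.seq (prune i1 a.lf) i', a, by simp [exec, he], by simpa [subAt] using hs⟩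
  | alt i1 i2 ih1 ih2 =>
      intro p hp
      simp [front] at hp
      rcases hp with ⟨q, hq, rfl⟩ | ⟨q, hq, rfl⟩
      · obtain ⟨i', a, he, hs⟩ := ih1 q hq
        exact ⟨i', a, by simp [exec, he], by simpa [subAt] using hs⟩
      · obtain ⟨i', a, he, hs⟩ := ih2 q hq
        exact ⟨i', a, by simp [exec, he], by simpa [subAt] using hs⟩
  | par i1 i2 ih1 ih2 =>
      intro p hp
      simp [front] at hp
      rcases hp with ⟨q, hq, rfl⟩ | ⟨q, hq, rfl⟩
      · obtain ⟨i', a, he, hs⟩ := ih1 q hq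
        exact ⟨.par i' i2, a, by simp [exec, he], by simpa [subAt] using hs⟩
      · obtain ⟨i', a, he, hs⟩ := ih2 q hq
        exact ⟨.par i1 i', a, by simp [exec, he], by simpa [subAt] using hs⟩
  | loopStrict i1 ih =>
      intro p hp
      simp [front] at hp
      rcases hp with ⟨q, hq, rfl⟩
      obtain ⟨i', a, he, hs⟩ := ih q hq
      exact ⟨.strict i' (.loopStrict i1), a, by simp [exec, he], by simpa [subAt] using hs⟩
  | loopSeq i1 ih =>
      intro p hp
      simp [front] at hp
      rcases hp with ⟨q, hq, rfl⟩
      obtain ⟨i', a, he, hs⟩ := ih q hq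
      exact ⟨.seq i' (.loopSeq i1), a, by simp [exec, he], by simpa [subAt] using hs⟩
  | loopPar i1 ih =>
      intro p hp
      simp [front] at hp
      rcases hp with ⟨q, hq, rfl⟩
      obtain ⟨i', a, he, hs⟩ := ih q hq
      exact ⟨.par i' (.loopPar i1), a, by simp [exec, he], by simpa [subAt] using hs⟩

lemma front_nonempty : ∀ (i : Interaction n M), expEps i = false → ∃ p, p ∈ front i := by
  intro i h
  induction i with
  | empty => simp [expEps] at h
  | act a => exact ⟨[], by simp [front]⟩
  | strict i1 i2 ih1 ih2 =>
      simp [expEps] at h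
      by_cases h1 : expEps i1 = true
      · obtain ⟨p, hp⟩ := ih2 (h h1)
        exact ⟨true :: p, mem_front_strict_right h1 hp⟩
      · obtain ⟨p, hp⟩ := ih1 (by simpa using h1)
        exact ⟨false :: p, mem_front_strict_left hp⟩
  | seq i1 i2 ih1 ih2 =>
      simp [expEps] at h
      by_cases h1 : expEps i1 = true
      · obtain ⟨p, hp⟩ := ih2 (h h1)
        obtain ⟨i', a, he, hs⟩ := exec_front i2 p hp
        refine ⟨true :: p, mem_front_seq_right hp ?_⟩
        simp [hs, expEps_avoids i1 a.lf h1]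
      · obtain ⟨p, hp⟩ := ih1 (by simpa using h1)
        exact ⟨false :: p, mem_front_seq_left hp⟩
  | alt i1 i2 ih1 ih2 =>
      simp [expEps] at h
      obtain ⟨p, hp⟩ := ih1 h.1
      exact ⟨false :: p, mem_front_alt_left hp⟩
  | par i1 i2 ih1 ih2 =>
      simp [expEps] at h
      by_cases h1 : expEps i1 = true
      · obtain ⟨p, hp⟩ := ih2 (h h1)
        exact ⟨true :: p, mem_front_par_right hp⟩
      · obtain ⟨p, hp⟩ := ih1 (by simpa using h1)
        exact ⟨false :: p, mem_front_par_left hp⟩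
  | loopStrict i1 ih => simp [expEps] at h
  | loopSeq i1 ih => simp [expEps] at h
  | loopPar i1 ih => simp [expEps] at h

lemma accept_strict_nil {i1 i2 : Interaction n M} {ς : List (MAction n M)}
    (h1 : expEps i1 = true) (h2 : Accept i2 ς) : Accept (.strict i1 i2) ς := by
  cases h2 with
  | nil he => exact .nil (by simp [expEps, h1, he])
  | @cons _ i2' a ς p hp he ha =>
      refine .cons (p := true :: p) (mem_front_strict_right h1 hp) ?_ ha
      simpa [exec] using he

lemma accept_strict {i1 i2 : Interaction n M} {ς1 ς2 : List (MAction n M)}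
    (h1 : Accept i1 ς1) (h2 : Accept i2 ς2) : Accept (.strict i1 i2) (ς1 ++ ς2) := by
  induction h1 with
  | nil he => exact accept_strict_nil he h2
  | @cons i i' a ς p hp he ha ih =>
      exact .cons (p := false :: p) (mem_front_strict_left hp) (by simp [exec, he]) ih

lemma accept_seq_nil : ∀ (i1 : Interaction n M) {i2 : Interaction n M} {ς : List (MAction n M)},
    expEps i1 = true → Accept i2 ς → Accept (.seq i1 i2) ς := by
  intro i1 i2 ς h1 h2
  induction h2 generalizing i1 with
  | nil he => exact .nil (by simp [expEps, h1, he])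
  | @cons i2 i2' a ς p hp he ha ih =>
      obtain ⟨j', a', he', hs⟩ := exec_front i2 p hp
      rw [he] at he'
      obtain ⟨rfl, rfl⟩ : i2' = j' ∧ a = a' := by
        injection he' with h; exact ⟨congrArg Prod.fst h, congrArg Prod.snd h⟩
      refine .cons (p := true :: p)
        (mem_front_seq_right hp (by simp [hs, expEps_avoids i1 a.lf h1])) ?_
        (ih (prune i1 a.lf) (expEps_prune i1 a.lf h1))
      simp [exec, he]

lemma accept_seq {i1 i2 : Interaction n M} {ς1 ς2 : List (MAction n M)}
    (h1 : Accept i1 ς1) (h2 : Accept i2 ς2) : Accept (.seq i1 i2) (ς1 ++ ς2) := by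
  induction h1 with
  | nil he => exact accept_seq_nil _ he h2
  | @cons i i' a ς p hp he ha ih =>
      exact .cons (p := false :: p) (mem_front_seq_left hp) (by simp [exec, he]) ih

lemma accept_par_nil {i1 i2 : Interaction n M} {ς : List (MAction n M)}
    (h1 : expEps i1 = true) (h2 : Accept i2 ς) : Accept (.par i1 i2) ς := by
  induction h2 with
  | nil he => exact .nil (by simp [expEps, h1, he])
  | @cons i2 i2' a ς p hp he ha ih =>
      exact .cons (p := true :: p) (mem_front_par_right hp) (by simp [exec, he]) ih

lemma accept_par {i1 i2 : Interaction n M} {ς1 ς2 : List (MAction n M)}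
    (h1 : Accept i1 ς1) (h2 : Accept i2 ς2) : Accept (.par i1 i2) (ς1 ++ ς2) := by
  induction h1 with
  | nil he => exact accept_par_nil he h2
  | @cons i i' a ς p hp he ha ih =>
      exact .cons (p := false :: p) (mem_front_par_left hp) (by simp [exec, he]) ih

lemma accept_exists : ∀ i : Interaction n M, ∃ ς, Accept i ς := by
  intro i
  induction i with
  | empty => exact ⟨[], .nil rfl⟩
  | act a =>
      exact ⟨[a], .cons (p := []) mem_front_act rfl (.nil rfl)⟩
  | strict i1 i2 ih1 ih2 =>
      obtain ⟨ς1, h1⟩ := ih1; obtain ⟨ς2, h2⟩ := ih2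
      exact ⟨ς1 ++ ς2, accept_strict h1 h2⟩
  | seq i1 i2 ih1 ih2 =>
      obtain ⟨ς1, h1⟩ := ih1; obtain ⟨ς2, h2⟩ := ih2
      exact ⟨ς1 ++ ς2, accept_seq h1 h2⟩
  | alt i1 i2 ih1 ih2 =>
      obtain ⟨ς1, h1⟩ := ih1
      cases h1 with
      | nil he => exact ⟨[], .nil (by simp [expEps, he])⟩
      | @cons _ i' a ς p hp he ha =>
          exact ⟨a :: ς, .cons (p := false :: p) (mem_front_alt_left hp) (by simpa [exec] using he) ha⟩

  | par i1 i2 ih1 ih2 =>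
      obtain ⟨ς1, h1⟩ := ih1; obtain ⟨ς2, h2⟩ := ih2
      exact ⟨ς1 ++ ς2, accept_par h1 h2⟩
  | loopStrict i1 ih => exact ⟨[], .nil rfl⟩
  | loopSeq i1 ih => exact ⟨[], .nil rfl⟩
  | loopPar i1 ih => exact ⟨[], .nil rfl⟩

end Interaction

lemma noStep_cov {n M} {v : Vertex3 n M} (h : AnaStep3 Vertex3.cov v) : False := by cases h
lemma noStep_uncov {n M} {v : Vertex3 n M} (h : AnaStep3 Vertex3.uncov v) : False := by cases h

/-- in the modified analysis relation, if there is a path from `(i,μ)`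
to the verdict `TooShort`, then there is a trace `ς` with `proj(ς) = μ` and a nonempty
trace `ς'` with `ς·ς' ∈ Accept(i)` : `ς` is a proper prefix of an accepted trace. -/
theorem tooShort_gives_proper_prefix (n : ℕ) (M : Type)
    (i : Interaction n M) (μ : Fin n → List (MAction n M)) (hμ : IsMult μ)
    (h : Relation.ReflTransGen AnaStep3 (Vertex3.node i μ) Vertex3.tooShort) :
    ∃ (ς ς' : List (MAction n M)),
      proj ς = μ ∧ ς' ≠ [] ∧ Accept i (ς ++ ς') := by
  have key : ∀ v : Vertex3 n M, Relation.ReflTransGen AnaStep3 v Vertex3.tooShort →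
      ∀ i (μ : Fin n → List (MAction n M)), v = .node i μ → IsMult μ →
      ∃ (ς ς' : List (MAction n M)), proj ς = μ ∧ ς' ≠ [] ∧ Accept i (ς ++ ς') := by
    intro v h
    induction h using Relation.ReflTransGen.head_induction_on with
    | refl => intro i μ hv; exact absurd hv (by simp)
    | head step rest ih =>
        intro i μ hv hμ
        subst hv
        cases step with
        | r1 hε hexp =>
            rcases Relation.ReflTransGen.cases_head rest with heq | ⟨c, hc, _⟩
            · exact absurd heq (by simp)
            · exact (noStep_cov hc).elim
        | r2' hε hexp =>
            obtain ⟨p, hp⟩ := Interaction.front_nonempty i hexp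
            obtain ⟨i', a, he, -⟩ := Interaction.exec_front i p hp
            obtain ⟨ς₀, hς₀⟩ := Interaction.accept_exists i'
            refine ⟨[], a :: ς₀, ?_, by simp, ?_⟩
            · funext j; rw [hε j]; rfl
            · exact .cons hp he hς₀
        | @r3 _ i' a p _ k σ hp he hμk =>
            have hmult : IsMult (Function.update μ k σ) := by
              intro j a' ha'
              by_cases hj : j = k
              · subst hj
                simp [Function.update_self] at ha'
                exact hμ j a' (by rw [hμk]; exact List.mem_cons_of_mem _ ha')
              · rw [Function.update_of_ne hj] at ha'
                exact hμ j a' ha'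
            obtain ⟨ς, ς', hproj, hne, hacc⟩ := ih i' (Function.update μ k σ) rfl hmult
            have half : a.lf = k := hμ k a (by rw [hμk]; exact List.mem_cons_self)
            refine ⟨a :: ς, ς', ?_, hne, .cons hp he hacc⟩
            funext j
            by_cases hj : a.lf = j
            · have hjk : j = k := hj ▸ half
              subst hjk
              simp only [proj, if_pos hj]
              rw [show proj ς j = σ from by rw [hproj]; simp [Function.update_self], hμk]
            · simp only [proj, if_neg hj]
              rw [hproj, Function.update_of_ne (by rw [← half]; exact fun h => hj h.symm)]
        | r4 h1 h2 =>
            rcases Relation.ReflTransGen.cases_head rest with heq | ⟨c, hc, _⟩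
            · exact absurd heq (by simp)
            · exact (noStep_uncov hc).elim
  exact key _ h i μ rfl hμ
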